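/- A regular tournament on 5 vertices satisfies F(D) = 1 < 2 = Z(D); in particular every 2-element subset of its vertices is a zero forcing set. -/

import Mathlib

/-- The set of out-neighbors of `v` in the digraph with arc relation `A`. -/
def Nout {V : Type} (A : V → V → Prop) (v : V) : Set V := {w | A v w}

/-- The set of in-neighbors of `v`. -/
def Nin {V : Type} (A : V → V → Prop) (v : V) : Set V := {w | A w v}

/-- One application of the color change rule to the set `S` of filled vertices. -/
def Bstep {V : Type} (A : V → V → Prop) (S : Set V) : Set V :=
  S ∪ {w | ∃ v ∈ S, Nout A v \ S = {w}}

/-- `S` is a zero forcing set: iterating the color change rule fills all vertices. -/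
def IsZFS {V : Type} (A : V → V → Prop) (S : Set V) : Prop :=
  ∃ t, (Bstep A)^[t] S = Set.univ

/-- The failed zero forcing number: the maximum cardinality of a failed zero forcing set. -/
noncomputable def Fnum {V : Type} (A : V → V → Prop) : ℕ :=
  sSup {k | ∃ S : Set V, ¬ IsZFS A S ∧ S.ncard = k}

/-- The zero forcing number: the minimum cardinality of a zero forcing set. -/
noncomputable def Znum {V : Type} (A : V → V → Prop) : ℕ :=
  sInf {k | ∃ S : Set V, IsZFS A S ∧ S.ncard = k}

/-- `W` is a critical set: `W` is nonempty and no vertex outside `W` has exactly one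
out-neighbor in `W`. -/
def IsCritical {V : Type} (A : V → V → Prop) (W : Set V) : Prop :=
  W.Nonempty ∧ ∀ v ∈ Wᶜ, (Nout A v ∩ W).ncard ≠ 1

/-- `D` is a directed cycle: either a single vertex with no arcs, or the vertices can be
cyclically labeled so that the arcs are exactly the consecutive ones. -/
def IsDirectedCycle {V : Type} [Fintype V] (A : V → V → Prop) : Prop :=
  (Fintype.card V = 1 ∧ ∀ u v : V, ¬ A u v) ∨
  (2 ≤ Fintype.card V ∧ ∃ e : ZMod (Fintype.card V) ≃ V,
      ∀ i j : ZMod (Fintype.card V), A (e i) (e j) ↔ j = i + 1)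

/-!
A vertex of a regular tournament on five vertices has out-degree and in-degree `2`. A set with at
most one vertex is stalled: a lone filled vertex has two empty out-neighbours. Conversely, every
filled set `S` with `2 ≤ |S| < 5` contains a vertex with exactly one out-neighbour outside `S`:
for `|S| = 2` the tail of the arc inside `S`; for `|S| = 4` any in-neighbour of the missing vertex;
for `|S| = 3`, with `y → z` the arc between the two empty vertices and `p` the other in-neighbour
of `z`, either `p` forces `z`, or `p → y` and the other in-neighbour `q` of `y` forces `y`. Hence
the color change rule never stalls once two vertices are filled.
-/

structure IsTournament {V : Type} (A : V → V → Prop) : Prop where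
  irrefl : ∀ v, ¬ A v v
  adj_iff_not_adj : ∀ u v : V, u ≠ v → (A u v ↔ ¬ A v u)

lemma Set.exists_eq_pair_of_mem_of_ncard_eq_two {α : Type*} {s : Set α} {a : α} (ha : a ∈ s)
    (hs : s.ncard = 2) : ∃ b, b ≠ a ∧ s = {a, b} := by
  obtain ⟨x, y, hxy, rfl⟩ := Set.ncard_eq_two.1 hs
  rcases ha with rfl | rfl
  · exact ⟨y, hxy.symm, rfl⟩
  · exact ⟨x, hxy, Set.pair_comm _ _⟩

lemma exists_set_ncard_eq {V : Type} [Finite V] {n : ℕ} (hn : n ≤ Nat.card V) :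
    ∃ S : Set V, S.ncard = n :=
  let ⟨S, _, hS⟩ := Set.exists_subset_card_eq (s := Set.univ) (by rwa [Set.ncard_univ])
  ⟨S, hS⟩

section ColorChange

variable {V : Type} {A : V → V → Prop} {S : Set V}

lemma subset_bstep (A : V → V → Prop) (S : Set V) : S ⊆ Bstep A S := Set.subset_union_left

lemma ssubset_bstep_of_nout_sdiff_eq_singleton {v w : V} (hv : v ∈ S)
    (h : Nout A v \ S = {w}) : S ⊂ Bstep A S := by
  have hw : w ∈ Nout A v \ S := h ▸ Set.mem_singleton w
  exact (Set.ssubset_iff_of_subset (subset_bstep A S)).2 ⟨w, Or.inr ⟨v, hv, h⟩, hw.2⟩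

lemma bstep_eq_self_of_subsingleton (hA : ∀ v, ¬ A v v) (hdeg : ∀ v, (Nout A v).ncard ≠ 1)
    (hS : S.Subsingleton) : Bstep A S = S := by
  refine Set.Subset.antisymm ?_ (subset_bstep A S)
  rintro w (hw | ⟨v, hv, hvw⟩)
  · exact hw
  · rw [hS.eq_singleton_of_mem hv,
      Set.sdiff_singleton_eq_self (show v ∉ Nout A v from hA v)] at hvw
    exact absurd (by rw [hvw, Set.ncard_singleton]) (hdeg v)

lemma not_isZFS_of_bstep_eq_self (h : Bstep A S = S) (hS : S ≠ Set.univ) : ¬ IsZFS A S :=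
  fun ⟨t, ht⟩ => hS (Function.iterate_fixed h t ▸ ht)

lemma isZFS_of_forall_ssubset_bstep [Finite V]
    (h : ∀ T, S ⊆ T → T ≠ Set.univ → T ⊂ Bstep A T) : IsZFS A S := by
  induction hn : Sᶜ.ncard using Nat.strong_induction_on generalizing S with
  | _ n ih =>
    by_cases hS : S = Set.univ
    · exact ⟨0, hS⟩
    have hlt : (Bstep A S)ᶜ.ncard < n :=
      hn ▸ Set.ncard_lt_ncard (compl_lt_compl_iff_lt.2 (h S le_rfl hS))
    obtain ⟨t, ht⟩ := ih _ hlt (fun T hT => h T ((subset_bstep A S).trans hT)) rfl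
    exact ⟨t + 1, by rwa [Function.iterate_succ_apply]⟩

lemma fnum_eq_of_isZFS_iff [Finite V] {k : ℕ} (h : ∀ S : Set V, IsZFS A S ↔ k + 1 ≤ S.ncard)
    (hk : k ≤ Nat.card V) : Fnum A = k := by
  have hfailed : {n | ∃ S : Set V, ¬ IsZFS A S ∧ S.ncard = n} = Set.Iic k := by
    ext n
    simp only [h, not_le, Set.mem_ofPred_eq, Set.mem_Iic]
    constructor
    · rintro ⟨S, hS, rfl⟩
      omega
    · intro hn
      obtain ⟨S, hS⟩ := exists_set_ncard_eq (hn.trans hk)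
      exact ⟨S, by omega, hS⟩
  rw [Fnum, hfailed, csSup_Iic]

lemma znum_eq_of_isZFS_iff [Finite V] {k : ℕ} (h : ∀ S : Set V, IsZFS A S ↔ k ≤ S.ncard)
    (hk : k ≤ Nat.card V) : Znum A = k := by
  obtain ⟨S, hS⟩ := exists_set_ncard_eq hk
  have hmem : k ∈ {n | ∃ S : Set V, IsZFS A S ∧ S.ncard = n} := ⟨S, (h S).2 hS.ge, hS⟩
  obtain ⟨T, hT, hTn⟩ := Nat.sInf_mem ⟨k, hmem⟩
  exact le_antisymm (Nat.sInf_le hmem) (by rw [Znum, ← hTn]; exact (h T).1 hT)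

end ColorChange

namespace IsTournament

variable {V : Type} {A : V → V → Prop} (hT : IsTournament A)
include hT

lemma ne_of_adj {u v : V} (h : A u v) : u ≠ v := by
  rintro rfl
  exact hT.irrefl u h

lemma not_adj_of_adj {u v : V} (h : A u v) : ¬ A v u :=
  (hT.adj_iff_not_adj u v (hT.ne_of_adj h)).1 h

lemma adj_of_not_adj {u v : V} (huv : u ≠ v) (h : ¬ A u v) : A v u :=
  (hT.adj_iff_not_adj v u huv.symm).2 h

lemma nin_eq_compl_insert_nout (v : V) : Nin A v = (insert v (Nout A v))ᶜ := by
  ext w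
  simp only [Nin, Nout, Set.mem_ofPred_eq, Set.mem_compl_iff, Set.mem_insert_iff, not_or]
  exact ⟨fun h => ⟨hT.ne_of_adj h, hT.not_adj_of_adj h⟩,
    fun ⟨hne, h⟩ => hT.adj_of_not_adj (Ne.symm hne) h⟩

lemma ncard_nin_add_ncard_nout [Finite V] (v : V) :
    (Nin A v).ncard + (Nout A v).ncard + 1 = Nat.card V := by
  rw [hT.nin_eq_compl_insert_nout, add_assoc,
    ← Set.ncard_insert_of_notMem (show v ∉ Nout A v from hT.irrefl v), add_comm,
    Set.ncard_add_ncard_compl]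

end IsTournament

section RegularTournament

variable {V : Type} {A : V → V → Prop} {S : Set V}

lemma nout_sdiff_eq_singleton_of_compl_eq_pair {v y z : V} (hS : Sᶜ = {y, z}) (hy : A v y)
    (hz : ¬ A v z) : Nout A v \ S = {y} := by
  rw [Set.sdiff_eq, hS]
  ext w
  simp only [Set.mem_inter_iff, Set.mem_insert_iff, Set.mem_singleton_iff]
  constructor
  · rintro ⟨hw, rfl | rfl⟩
    · rfl
    · exact absurd hw hz
  · rintro rfl
    exact ⟨hy, Or.inl rfl⟩

lemma ssubset_bstep_of_ncard_eq_two (hT : IsTournament A) (hreg : ∀ v, (Nout A v).ncard = 2)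
    (hS : S.ncard = 2) : S ⊂ Bstep A S := by
  obtain ⟨u, v, huv, rfl⟩ := Set.ncard_eq_two.1 hS
  wlog huv' : A u v generalizing u v
  · rw [Set.pair_comm] at hS ⊢
    exact this v u (Ne.symm huv) hS (hT.adj_of_not_adj huv huv')
  obtain ⟨x, hxv, hx⟩ :=
    Set.exists_eq_pair_of_mem_of_ncard_eq_two (show v ∈ Nout A u from huv') (hreg u)
  have hxu : x ≠ u := Ne.symm (hT.ne_of_adj (show x ∈ Nout A u from hx ▸ Or.inr rfl))
  refine ssubset_bstep_of_nout_sdiff_eq_singleton (Set.mem_insert u {v}) (w := x) ?_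
  rw [hx]
  ext w
  simp only [Set.mem_sdiff, Set.mem_insert_iff, Set.mem_singleton_iff]
  grind

lemma ssubset_bstep_of_ncard_compl_eq_one (hA : ∀ v, ¬ A v v) (hin : ∀ v, (Nin A v).Nonempty)
    (hS : Sᶜ.ncard = 1) : S ⊂ Bstep A S := by
  obtain ⟨z, hz⟩ := Set.ncard_eq_one.1 hS
  obtain ⟨p, hp⟩ := hin z
  have hpS : p ∈ S := by
    by_contra hpS
    obtain rfl : p = z := show p ∈ ({z} : Set V) from hz ▸ hpS
    exact hA p hp
  refine ssubset_bstep_of_nout_sdiff_eq_singleton hpS (w := z) ?_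
  rw [Set.sdiff_eq, hz]
  exact Set.inter_singleton_of_mem hp

lemma ssubset_bstep_of_ncard_compl_eq_two (hT : IsTournament A) (hin : ∀ v, (Nin A v).ncard = 2)
    (hS : Sᶜ.ncard = 2) : S ⊂ Bstep A S := by
  obtain ⟨y, z, hyz, hS⟩ := Set.ncard_eq_two.1 hS
  wlog hyz' : A y z generalizing y z
  · exact this z y (Ne.symm hyz) (by rw [hS, Set.pair_comm]) (hT.adj_of_not_adj hyz hyz')
  have mem_of_ne {x : V} (hxy : x ≠ y) (hxz : x ≠ z) : x ∈ S := by
    by_contra hx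
    have : x ∈ ({y, z} : Set V) := hS ▸ hx
    rcases this with rfl | rfl <;> contradiction
  obtain ⟨p, hpy, hNz⟩ :=
    Set.exists_eq_pair_of_mem_of_ncard_eq_two (show y ∈ Nin A z from hyz') (hin z)
  have hpz : A p z := show p ∈ Nin A z from hNz ▸ Or.inr rfl
  have hpS := mem_of_ne hpy (hT.ne_of_adj hpz)
  by_cases hpy' : A p y
  · obtain ⟨q, hqp, hNy⟩ :=
      Set.exists_eq_pair_of_mem_of_ncard_eq_two (show p ∈ Nin A y from hpy') (hin y)
    have hqy : A q y := show q ∈ Nin A y from hNy ▸ Or.inr rfl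
    have hqz : ¬ A q z := by
      intro h
      rcases (show q ∈ ({y, p} : Set V) from hNz ▸ h) with rfl | rfl
      exacts [hT.irrefl q hqy, hqp rfl]
    have hqS := mem_of_ne (hT.ne_of_adj hqy) (by rintro rfl; exact hT.not_adj_of_adj hyz' hqy)
    exact ssubset_bstep_of_nout_sdiff_eq_singleton hqS
      (nout_sdiff_eq_singleton_of_compl_eq_pair hS hqy hqz)
  · exact ssubset_bstep_of_nout_sdiff_eq_singleton hpS
      (nout_sdiff_eq_singleton_of_compl_eq_pair (by rw [hS, Set.pair_comm]) hpz hpy')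

lemma isZFS_iff_two_le_ncard [Finite V] (hT : IsTournament A) (hcard : Nat.card V = 5)
    (hreg : ∀ v, (Nout A v).ncard = 2) : IsZFS A S ↔ 2 ≤ S.ncard := by
  have hin (v : V) : (Nin A v).ncard = 2 := by
    have := hT.ncard_nin_add_ncard_nout v
    rw [hreg, hcard] at this
    omega
  constructor
  · intro hZ
    by_contra! hS
    refine not_isZFS_of_bstep_eq_self ?_ ?_ hZ
    · exact bstep_eq_self_of_subsingleton hT.irrefl (by simp [hreg])
        (Set.ncard_le_one_iff_subsingleton.1 (by omega))
    · rintro rfl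
      rw [Set.ncard_univ] at hS
      omega
  · intro h2
    refine isZFS_of_forall_ssubset_bstep fun T hST hT_ne => ?_
    have h2T := h2.trans (Set.ncard_le_ncard hST)
    have hcompl := Set.ncard_add_ncard_compl T
    have hcompl_pos := (Set.ncard_pos).2 (Set.nonempty_compl.2 hT_ne)
    rw [hcard] at hcompl
    obtain h | h | h : T.ncard = 2 ∨ Tᶜ.ncard = 2 ∨ Tᶜ.ncard = 1 := by omega
    · exact ssubset_bstep_of_ncard_eq_two hT hreg h
    · exact ssubset_bstep_of_ncard_compl_eq_two hT hin h
    · exact ssubset_bstep_of_ncard_compl_eq_one hT.irrefl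
        (fun v => Set.nonempty_of_ncard_ne_zero (by rw [hin v]; norm_num)) h

end RegularTournament

theorem stmt_12 {V : Type} [Fintype V] (A : V → V → Prop)
    (hcard : Fintype.card V = 5) (hA : Irreflexive A)
    (htour : ∀ u v : V, u ≠ v → (A u v ↔ ¬ A v u))
    (hreg : ∀ v : V, (Nout A v).ncard = 2) :
    Fnum A = 1 ∧ Znum A = 2 ∧ ∀ S : Set V, S.ncard = 2 → IsZFS A S := by
  have hcard' : Nat.card V = 5 := by rw [Nat.card_eq_fintype_card, hcard]
  have hZFS (S : Set V) : IsZFS A S ↔ 2 ≤ S.ncard :=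
    isZFS_iff_two_le_ncard ⟨hA, htour⟩ hcard' hreg
  exact ⟨fnum_eq_of_isZFS_iff hZFS (by omega), znum_eq_of_isZFS_iff hZFS (by omega),
    fun S hS => (hZFS S).2 hS.ge⟩
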